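/- Under the setup of Algorithm 1 with γ > 0 and η > 0, the sequence of orthogonal iterates satisfies Σ_{t=1}^∞ Σ_{i=1}^M ‖R_i^{(t)} − R_i^{(t−1)}‖_F² < ∞; in particular R_i^{(t)} − R_i^{(t−1)} → 0 for every i as t → ∞. -/

import Mathlib

open Matrix Filter
open scoped BigOperators

noncomputable section

def sqnorm {d : ℕ} (v : Fin d → ℝ) : ℝ := ∑ k, v k ^ 2

def frobSq {d : ℕ} (A : Matrix (Fin d) (Fin d) ℝ) : ℝ := ∑ a, ∑ b, (A a b) ^ 2

def wCoef {M d : ℕ} (γ : ℝ) (μ : Fin M → (Fin d → ℝ)) (i j : Fin M) : ℝ :=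
  Real.exp (-γ * (sqnorm (μ i) + sqnorm (μ j)))

def kCoef {M d : ℕ} (γ : ℝ) (μ : Fin M → (Fin d → ℝ))
    (R : Fin M → Matrix (Fin d) (Fin d) ℝ) (i j : Fin M) : ℝ :=
  Real.exp (2 * γ * (((R i).mulVec (μ i)) ⬝ᵥ ((R j).mulVec (μ j))))

def Hmat {M d : ℕ} (γ η : ℝ) (μ : Fin M → (Fin d → ℝ))
    (R : Fin M → Matrix (Fin d) (Fin d) ℝ) (i : Fin M) :
    Matrix (Fin d) (Fin d) ℝ :=
  (∑ j, (wCoef γ μ i j * kCoef γ μ R i j) •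
      Matrix.vecMulVec ((R j).mulVec (μ j)) (μ i)) + η • R i

end

/-!
With `a_i = R_i μ_i`, the objective `L(R) = ∑_{i,j} exp (-γ ‖a_i - a_j‖²)` is at most `M²`, and
each step of Algorithm 1 raises it by at least `2γη ∑_i ‖R_i' - R_i‖_F²`; a bounded sequence with
such increments has summable increments. The ascent combines three facts. The exponential lies
above its tangent lines, which bounds the gain below by `2γ ∑_{i,j} w_ij (a_i'·a_j' - a_i·a_j)`. The
kernel `exp (2γ a_i·a_j)` is positive semidefinite (Schur product theorem, term by term in its
power series), which disposes of the part quadratic in `a' - a`. Finally `R_i' = U Vᵀ` maximises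
`tr (Xᵀ H_i)` over orthogonal `X` (von Neumann), and `‖R_i' - R_i‖_F² = -2 tr ((R_i' - R_i)ᵀ R_i)`,
so the linear part is at least `η ∑_i ‖R_i' - R_i‖_F²`.
-/

open Finset

section Kernel

variable {ι κ : Type*} [Fintype ι] [Fintype κ]

theorem posSemidef_dotProduct_pow (a : ι → κ → ℝ) (n : ℕ) :
    (Matrix.of fun i j => (a i ⬝ᵥ a j) ^ n).PosSemidef := by
  induction n with
  | zero =>
    convert posSemidef_vecMulVec_self_star (fun _ : ι => (1 : ℝ)) using 1
    ext; simp [vecMulVec]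
  | succ n ih =>
    have hgram : (Matrix.of fun i j => a i ⬝ᵥ a j).PosSemidef := by
      convert posSemidef_self_mul_conjTranspose (Matrix.of a) using 1
      ext; simp [mul_apply, dotProduct]
    rw [show (Matrix.of fun i j => (a i ⬝ᵥ a j) ^ (n + 1))
        = (Matrix.of fun i j => (a i ⬝ᵥ a j) ^ n) ⊙ Matrix.of fun i j => a i ⬝ᵥ a j by
      ext; simp [pow_succ]]
    exact ih.hadamard hgram

theorem sum_exp_dotProduct_mul_dotProduct_nonneg {c : ℝ} (hc : 0 ≤ c) (a δ : ι → κ → ℝ) :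
    0 ≤ ∑ i, ∑ j, Real.exp (c * (a i ⬝ᵥ a j)) * (δ i ⬝ᵥ δ j) := by
  have hseries : HasSum (fun n : ℕ => c ^ n / n.factorial *
      ∑ i, ∑ j, (a i ⬝ᵥ a j) ^ n * (δ i ⬝ᵥ δ j))
      (∑ i, ∑ j, Real.exp (c * (a i ⬝ᵥ a j)) * (δ i ⬝ᵥ δ j)) := by
    simp_rw [mul_sum]
    refine hasSum_sum fun i _ => hasSum_sum fun j _ => ?_
    have hexp := (NormedSpace.expSeries_div_hasSum_exp (c * (a i ⬝ᵥ a j))).mul_right (δ i ⬝ᵥ δ j)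
    rw [← Real.exp_eq_exp_ℝ] at hexp
    exact hexp.congr_fun fun n => by ring
  refine hseries.nonneg fun n => mul_nonneg (by positivity) ?_
  -- Schur product theorem, tested against the all-ones vector
  have hschur := ((posSemidef_dotProduct_pow a n).hadamard
    (posSemidef_dotProduct_pow δ 1)).dotProduct_mulVec_nonneg 1
  simpa [dotProduct, mulVec] using hschur

end Kernel

section Orthogonal

variable {n : Type*} [Fintype n] [DecidableEq n]

theorem diag_le_one_of_mul_transpose_eq_one {Q : Matrix n n ℝ} (hQ : Q * Qᵀ = 1) (k : n) :
    Q k k ≤ 1 := by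
  have hrow : ∑ j, Q k j ^ 2 = 1 := by
    simpa [mul_apply, sq] using congrFun (congrFun hQ k) k
  have hkk : Q k k ^ 2 ≤ 1 :=
    hrow ▸ single_le_sum (fun j _ => sq_nonneg (Q k j)) (mem_univ k)
  exact (sq_le_one_iff_abs_le_one _ |>.mp hkk).trans' (le_abs_self _)

theorem dotProduct_mulVec_self_of_orthogonal {Q : Matrix n n ℝ} (hQ : Qᵀ * Q = 1)
    (v : n → ℝ) : Q *ᵥ v ⬝ᵥ Q *ᵥ v = v ⬝ᵥ v := by
  rw [dotProduct_mulVec, vecMul_mulVec, hQ, vecMul_one]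

theorem trace_mul_diagonal_le_sum {Q : Matrix n n ℝ} (hQ : Q * Qᵀ = 1) {s : n → ℝ}
    (hs : ∀ k, 0 ≤ s k) : trace (Q * diagonal s) ≤ ∑ k, s k := by
  simp only [trace, Matrix.diag, mul_diagonal]
  exact sum_le_sum fun k _ =>
    mul_le_of_le_one_left (hs k) (diag_le_one_of_mul_transpose_eq_one hQ k)

def IsPolarFactor (X H : Matrix n n ℝ) : Prop :=
  ∃ (U V : Matrix n n ℝ) (s : n → ℝ), Uᵀ * U = 1 ∧ Vᵀ * V = 1 ∧ (∀ k, 0 ≤ s k) ∧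
    H = U * diagonal s * Vᵀ ∧ X = U * Vᵀ

namespace IsPolarFactor

variable {X H : Matrix n n ℝ}

theorem transpose_mul_self (hX : IsPolarFactor X H) : Xᵀ * X = 1 := by
  obtain ⟨U, V, s, hU, hV, -, -, rfl⟩ := hX
  rw [transpose_mul, transpose_transpose, Matrix.mul_assoc, ← Matrix.mul_assoc Uᵀ, hU,
    Matrix.one_mul, mul_eq_one_comm.mp hV]

/-- A special case of von Neumann's trace inequality. -/
theorem trace_transpose_mul_le (hX : IsPolarFactor X H) {R : Matrix n n ℝ} (hR : Rᵀ * R = 1) :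
    trace (Rᵀ * H) ≤ trace (Xᵀ * H) := by
  obtain ⟨U, V, s, hU, hV, hs, rfl, rfl⟩ := hX
  have hpolar : trace ((U * Vᵀ)ᵀ * (U * diagonal s * Vᵀ)) = ∑ k, s k := by
    rw [transpose_mul, transpose_transpose, Matrix.mul_assoc, ← Matrix.mul_assoc Uᵀ,
      ← Matrix.mul_assoc Uᵀ, hU, Matrix.one_mul, trace_mul_comm, Matrix.mul_assoc, hV,
      Matrix.mul_one, trace_diagonal]
  set Q := Vᵀ * Rᵀ * U
  have hQ : Q * Qᵀ = 1 := by
    simp only [Q, transpose_mul, transpose_transpose, Matrix.mul_assoc]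
    rw [← Matrix.mul_assoc U Uᵀ, mul_eq_one_comm.mp hU, Matrix.one_mul,
      ← Matrix.mul_assoc Rᵀ R, hR, Matrix.one_mul, hV]
  calc trace (Rᵀ * (U * diagonal s * Vᵀ)) = trace (Q * diagonal s) := by
        rw [← Matrix.mul_assoc, trace_mul_comm]
        simp only [Q, Matrix.mul_assoc]
    _ ≤ ∑ k, s k := trace_mul_diagonal_le_sum hQ hs
    _ = _ := hpolar.symm

end IsPolarFactor

end Orthogonal

section Norms

variable {d : ℕ}

theorem sqnorm_eq_dotProduct (v : Fin d → ℝ) : sqnorm v = v ⬝ᵥ v := by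
  simp [sqnorm, dotProduct, sq]

theorem frobSq_nonneg (A : Matrix (Fin d) (Fin d) ℝ) : 0 ≤ frobSq A :=
  sum_nonneg fun _ _ => sum_nonneg fun _ _ => sq_nonneg _

theorem frobSq_eq_trace (A : Matrix (Fin d) (Fin d) ℝ) : frobSq A = trace (Aᵀ * A) := by
  simp only [frobSq, trace, Matrix.diag, mul_apply, transpose_apply, sq]
  exact sum_comm

theorem frobSq_sub_of_orthogonal {P Q : Matrix (Fin d) (Fin d) ℝ} (hP : Pᵀ * P = 1)
    (hQ : Qᵀ * Q = 1) : frobSq (P - Q) = -2 * trace ((P - Q)ᵀ * Q) := by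
  have hcomm : trace (Qᵀ * P) = trace (Pᵀ * Q) := by
    rw [← trace_transpose, transpose_mul, transpose_transpose]
  rw [frobSq_eq_trace, transpose_sub, Matrix.sub_mul, Matrix.sub_mul, Matrix.mul_sub,
    Matrix.mul_sub, trace_sub, trace_sub, trace_sub, trace_sub, hP, hQ, hcomm]
  ring

attribute [local instance] frobeniusNormedAddCommGroup in
theorem tendsto_zero_of_tendsto_frobSq {α : Type*} {l : Filter α}
    {f : α → Matrix (Fin d) (Fin d) ℝ} (h : Tendsto (fun x => frobSq (f x)) l (nhds 0)) :
    Tendsto f l (nhds 0) := by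
  have hnorm : ∀ A : Matrix (Fin d) (Fin d) ℝ, ‖A‖ = Real.sqrt (frobSq A) := fun A => by
    rw [frobenius_norm_def, Real.sqrt_eq_rpow]
    simp [frobSq, Real.norm_eq_abs, sq_abs]
  refine tendsto_zero_iff_norm_tendsto_zero.mpr ?_
  simpa [hnorm] using h.sqrt

end Norms

theorem summable_of_add_mul_le_of_le {L g : ℕ → ℝ} {c B : ℝ} (hc : 0 < c) (hg : ∀ t, 0 ≤ g t)
    (hL : ∀ t, L t + c * g t ≤ L (t + 1)) (hB : ∀ t, L t ≤ B) : Summable g := by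
  have hpartial : ∀ n, L 0 + c * ∑ t ∈ range n, g t ≤ L n := by
    intro n
    induction n with
    | zero => simp
    | succ n ih => rw [sum_range_succ]; linarith [hL n]
  refine summable_of_sum_range_le (c := (B - L 0) / c) hg fun n => ?_
  rw [le_div_iff₀ hc]
  linarith [hpartial n, hB n]

theorem Real.exp_mul_one_add_sub_le_exp (x y : ℝ) : Real.exp x * (1 + (y - x)) ≤ Real.exp y := by
  calc Real.exp x * (1 + (y - x)) ≤ Real.exp x * Real.exp (y - x) := by
        gcongr; linarith [Real.add_one_le_exp (y - x)]
    _ = Real.exp y := by rw [← Real.exp_add, add_sub_cancel]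

theorem sum_mul_dotProduct_sub_dotProduct {ι κ : Type*} [Fintype ι] [Fintype κ]
    {W : ι → ι → ℝ} (hW : ∀ i j, W i j = W j i) (x y : ι → κ → ℝ) :
    ∑ i, ∑ j, W i j * (y i ⬝ᵥ y j - x i ⬝ᵥ x j)
      = 2 * ∑ i, ∑ j, W i j * ((y i - x i) ⬝ᵥ x j)
        + ∑ i, ∑ j, W i j * ((y i - x i) ⬝ᵥ (y j - x j)) := by
  have hswap : ∑ i, ∑ j, W i j * (x i ⬝ᵥ (y j - x j)) = ∑ i, ∑ j, W i j * ((y i - x i) ⬝ᵥ x j) := by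
    rw [sum_comm]
    simp_rw [hW _ _, dotProduct_comm (x _)]
  have hsplit : ∀ i j, y i ⬝ᵥ y j - x i ⬝ᵥ x j
      = (y i - x i) ⬝ᵥ x j + x i ⬝ᵥ (y j - x j) + (y i - x i) ⬝ᵥ (y j - x j) := by
    intro i j
    simp only [sub_dotProduct, dotProduct_sub]
    ring
  simp_rw [hsplit, mul_add, sum_add_distrib, hswap]
  ring

section Algorithm

variable {M d : ℕ} (γ η : ℝ) (μ : Fin M → Fin d → ℝ)

noncomputable def weight (R : Fin M → Matrix (Fin d) (Fin d) ℝ) (i j : Fin M) : ℝ :=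
  wCoef γ μ i j * kCoef γ μ R i j

noncomputable def objective (R : Fin M → Matrix (Fin d) (Fin d) ℝ) : ℝ :=
  ∑ i, ∑ j, weight γ μ R i j

variable {γ η μ} {R R' : Fin M → Matrix (Fin d) (Fin d) ℝ}

theorem weight_comm (i j : Fin M) : weight γ μ R i j = weight γ μ R j i := by
  simp only [weight, wCoef, kCoef, add_comm (sqnorm (μ i)), dotProduct_comm ((R i) *ᵥ μ i)]

theorem weight_eq_mul_exp (i j : Fin M) :
    weight γ μ R i j = Real.exp (-γ * sqnorm (μ i)) * Real.exp (-γ * sqnorm (μ j))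
      * Real.exp (2 * γ * (R i *ᵥ μ i ⬝ᵥ R j *ᵥ μ j)) := by
  rw [weight, wCoef, kCoef, ← Real.exp_add, ← Real.exp_add, ← Real.exp_add]
  ring_nf

theorem weight_eq_exp_neg_sqnorm (hR : ∀ i, (R i)ᵀ * R i = 1) (i j : Fin M) :
    weight γ μ R i j = Real.exp (-γ * sqnorm (R i *ᵥ μ i - R j *ᵥ μ j)) := by
  rw [weight, wCoef, kCoef, ← Real.exp_add]
  simp only [sqnorm_eq_dotProduct, sub_dotProduct, dotProduct_sub,
    dotProduct_mulVec_self_of_orthogonal (hR _), dotProduct_comm (R j *ᵥ μ j)]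
  ring_nf

theorem objective_le_sq (hγ : 0 ≤ γ) (hR : ∀ i, (R i)ᵀ * R i = 1) :
    objective γ μ R ≤ (M : ℝ) ^ 2 := by
  have hweight : ∀ i j, weight γ μ R i j ≤ 1 := fun i j => by
    rw [weight_eq_exp_neg_sqnorm hR, Real.exp_le_one_iff, neg_mul, neg_nonpos]
    exact mul_nonneg hγ (sum_nonneg fun _ _ => sq_nonneg _)
  calc objective γ μ R ≤ ∑ _i : Fin M, ∑ _j : Fin M, (1 : ℝ) :=
        sum_le_sum fun i _ => sum_le_sum fun j _ => hweight i j
    _ = (M : ℝ) ^ 2 := by simp [sq]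

theorem sum_weight_mul_dotProduct_nonneg (hγ : 0 ≤ γ) (δ : Fin M → Fin d → ℝ) :
    0 ≤ ∑ i, ∑ j, weight γ μ R i j * (δ i ⬝ᵥ δ j) := by
  set e : Fin M → ℝ := fun i => Real.exp (-γ * sqnorm (μ i))
  have hrewrite : ∀ i j, weight γ μ R i j * (δ i ⬝ᵥ δ j)
      = Real.exp (2 * γ * (R i *ᵥ μ i ⬝ᵥ R j *ᵥ μ j)) * ((e i • δ i) ⬝ᵥ (e j • δ j)) := by
    intro i j
    rw [weight_eq_mul_exp, smul_dotProduct, dotProduct_smul, smul_eq_mul, smul_eq_mul]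
    ring
  simp_rw [hrewrite]
  exact sum_exp_dotProduct_mul_dotProduct_nonneg (by positivity) _ _

theorem weight_mul_one_add_le (i j : Fin M) :
    weight γ μ R i j * (1 + 2 * γ * (R' i *ᵥ μ i ⬝ᵥ R' j *ᵥ μ j - R i *ᵥ μ i ⬝ᵥ R j *ᵥ μ j))
      ≤ weight γ μ R' i j := by
  rw [weight, weight, kCoef, kCoef, mul_assoc, mul_sub]
  exact mul_le_mul_of_nonneg_left (Real.exp_mul_one_add_sub_le_exp _ _) (Real.exp_pos _).le

theorem trace_transpose_mul_Hmat (X : Matrix (Fin d) (Fin d) ℝ) (i : Fin M) :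
    trace (Xᵀ * Hmat γ η μ R i)
      = ∑ j, weight γ μ R i j * (X *ᵥ μ i ⬝ᵥ R j *ᵥ μ j) + η * trace (Xᵀ * R i) := by
  simp only [Hmat, Matrix.mul_add, trace_add, Matrix.mul_smul, trace_smul, smul_eq_mul,
    Matrix.mul_sum, trace_sum]
  congr 1
  refine sum_congr rfl fun j _ => ?_
  rw [weight, mul_vecMulVec, trace_vecMulVec, mulVec_transpose, ← dotProduct_mulVec,
    dotProduct_comm]

theorem half_mul_frobSq_sub_le_of_isPolarFactor (hR : ∀ i, (R i)ᵀ * R i = 1) {i : Fin M}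
    {X : Matrix (Fin d) (Fin d) ℝ} (hX : IsPolarFactor X (Hmat γ η μ R i)) :
    η / 2 * frobSq (X - R i) ≤ ∑ j, weight γ μ R i j * ((X - R i) *ᵥ μ i ⬝ᵥ R j *ᵥ μ j) := by
  have hascent : 0 ≤ trace ((X - R i)ᵀ * Hmat γ η μ R i) := by
    rw [transpose_sub, Matrix.sub_mul, trace_sub, sub_nonneg]
    exact hX.trace_transpose_mul_le (hR i)
  rw [frobSq_sub_of_orthogonal hX.transpose_mul_self (hR i)]
  linarith [trace_transpose_mul_Hmat (γ := γ) (η := η) (μ := μ) (R := R) (X - R i) i]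

theorem objective_add_le_objective (hγ : 0 ≤ γ) (hR : ∀ i, (R i)ᵀ * R i = 1)
    (hR' : ∀ i, IsPolarFactor (R' i) (Hmat γ η μ R i)) :
    objective γ μ R + 2 * γ * η * ∑ i, frobSq (R' i - R i) ≤ objective γ μ R' := by
  set x : Fin M → Fin d → ℝ := fun i => R i *ᵥ μ i
  set y : Fin M → Fin d → ℝ := fun i => R' i *ᵥ μ i
  have hlinear : η * ∑ i, frobSq (R' i - R i)
      ≤ 2 * ∑ i, ∑ j, weight γ μ R i j * ((y i - x i) ⬝ᵥ x j) := by
    rw [mul_sum, mul_sum]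
    refine sum_le_sum fun i _ => ?_
    have := half_mul_frobSq_sub_le_of_isPolarFactor hR (hR' i)
    simp only [sub_mulVec] at this
    linarith
  have hquadratic : 0 ≤ ∑ i, ∑ j, weight γ μ R i j * ((y i - x i) ⬝ᵥ (y j - x j)) :=
    sum_weight_mul_dotProduct_nonneg hγ _
  have htangent : objective γ μ R + 2 * γ * ∑ i, ∑ j, weight γ μ R i j * (y i ⬝ᵥ y j - x i ⬝ᵥ x j)
      ≤ objective γ μ R' := by
    simp only [objective, mul_sum, ← sum_add_distrib]
    refine sum_le_sum fun i _ => sum_le_sum fun j _ => ?_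
    linarith [weight_mul_one_add_le (γ := γ) (μ := μ) (R := R) (R' := R') i j]
  rw [sum_mul_dotProduct_sub_dotProduct weight_comm] at htangent
  have hgain :=
    mul_le_mul_of_nonneg_left (add_le_add hlinear hquadratic) (mul_nonneg zero_le_two hγ)
  linarith

end Algorithm

theorem algorithm1_increments_summable (M d : ℕ) (γ η : ℝ) (hγ : 0 < γ) (hη : 0 < η)
    (μ : Fin M → (Fin d → ℝ))
    (Rseq : ℕ → Fin M → Matrix (Fin d) (Fin d) ℝ)
    (hR0 : ∀ i, (Rseq 0 i)ᵀ * Rseq 0 i = 1)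
    (hstep : ∀ t : ℕ, ∀ i, ∃ (U V : Matrix (Fin d) (Fin d) ℝ) (s : Fin d → ℝ),
      Uᵀ * U = 1 ∧ Vᵀ * V = 1 ∧ (∀ k, 0 ≤ s k) ∧
      Hmat γ η μ (Rseq t) i = U * Matrix.diagonal s * Vᵀ ∧
      Rseq (t + 1) i = U * Vᵀ) :
    Summable (fun t : ℕ => ∑ i, frobSq (Rseq (t + 1) i - Rseq t i)) ∧
      ∀ i, Tendsto (fun t : ℕ => Rseq (t + 1) i - Rseq t i) atTop (nhds 0) := by
  have hpolar : ∀ t i, IsPolarFactor (Rseq (t + 1) i) (Hmat γ η μ (Rseq t) i) := hstep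
  have horth : ∀ t i, (Rseq t i)ᵀ * Rseq t i = 1
    | 0 => hR0
    | t + 1 => fun i => (hpolar t i).transpose_mul_self
  have hsummable : Summable fun t => ∑ i, frobSq (Rseq (t + 1) i - Rseq t i) :=
    summable_of_add_mul_le_of_le (by positivity) (fun t => sum_nonneg fun i _ => frobSq_nonneg _)
      (fun t => objective_add_le_objective hγ.le (horth t) (hpolar t))
      (fun t => objective_le_sq hγ.le (horth t))
  refine ⟨hsummable, fun i => tendsto_zero_of_tendsto_frobSq ?_⟩
  refine squeeze_zero (fun t => frobSq_nonneg _) (fun t => ?_) hsummable.tendsto_atTop_zero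
  exact single_le_sum (f := fun j => frobSq (Rseq (t + 1) j - Rseq t j))
    (fun j _ => frobSq_nonneg _) (mem_univ i)
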